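/- arXiv:2401.08019 — 3 statements merged into one kernel-verified Lean document; each statement's English description precedes it below -/
import Mathlib

section
/- For a shortest path P of length n in a finite simple graph with maximum degree Δ(G) ≥ 2, the centrality satisfies C(P) ≤ (n + 1)(Δ(G) − 2) + 4 when n ≥ 1. -/
open SimpleGraph

/-- The neighbourhood of a path `P`. -/
def pathNbhd {V : Type*} (G : SimpleGraph V) {s t : V} (p : G.Walk s t) : Set V :=
  {v | v ∉ p.support ∧ ∃ u ∈ p.support, G.Adj u v}

private lemma support_eq_map_getVert {V : Type*} {G : SimpleGraph V} :
    ∀ {s t : V} (p : G.Walk s t), p.support = (List.range (p.length + 1)).map p.getVert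
  | _, _, SimpleGraph.Walk.nil => by simp [SimpleGraph.Walk.getVert]
  | _, _, SimpleGraph.Walk.cons h q => by
    rw [SimpleGraph.Walk.support_cons, SimpleGraph.Walk.length_cons,
      List.range_succ_eq_map, List.map_cons, List.map_map]
    simp only [Function.comp_def, SimpleGraph.Walk.getVert_cons_succ,
      SimpleGraph.Walk.getVert_zero]
    rw [support_eq_map_getVert q]

private lemma getVert_mem_support' {V : Type*} {G : SimpleGraph V} {s t : V}
    (p : G.Walk s t) (i : ℕ) : p.getVert i ∈ p.support := by
  by_cases h : i ≤ p.length
  · rw [support_eq_map_getVert]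
    exact List.mem_map.2 ⟨i, List.mem_range.2 (by omega), rfl⟩
  · rw [p.getVert_of_length_le (by omega)]
    exact SimpleGraph.Walk.end_mem_support p

private lemma getVert_injOn' {V : Type*} {G : SimpleGraph V} {s t : V}
    {p : G.Walk s t} (hp : p.IsPath) :
    ∀ i ≤ p.length, ∀ j ≤ p.length, p.getVert i = p.getVert j → i = j := by
  have hnodup := hp.support_nodup
  rw [support_eq_map_getVert] at hnodup
  intro i hi j hj hij
  exact List.inj_on_of_nodup_map hnodup (List.mem_range.2 (by omega))
    (List.mem_range.2 (by omega)) hij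

/-- For a shortest path `P` of length `n ≥ 1` in a finite simple graph with maximum
degree `Δ(G) ≥ 2`, the centrality satisfies `C(P) ≤ (n + 1)(Δ(G) − 2) + 4`. -/
theorem centrality_bound_shortest {V : Type*} [Fintype V] (G : SimpleGraph V)
    [DecidableRel G.Adj] {s t : V} (p : G.Walk s t)
    (hpath : p.IsPath) (hshort : p.length = G.dist s t)
    (hn : 1 ≤ p.length) (hDelta : 2 ≤ G.maxDegree) :
    (pathNbhd G p).ncard ≤ (p.length + 1) * (G.maxDegree - 2) + 4 := by
  classical
  set n := p.length with hnn
  set S : Finset V := p.support.toFinset with hS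
  have hmemS : ∀ i, p.getVert i ∈ S := fun i =>
    List.mem_toFinset.2 (getVert_mem_support' p i)
  -- identify pathNbhd with a Finset
  have hset : pathNbhd G p = ↑(S.biUnion fun u => G.neighborFinset u \ S) := by
    ext v
    simp only [pathNbhd, Set.mem_setOf_eq, Finset.coe_biUnion, Set.mem_iUnion,
      Finset.mem_coe, Finset.mem_sdiff, mem_neighborFinset, hS, List.mem_toFinset]
    tauto
  rw [hset, Set.ncard_coe_finset]
  have hScard : S.card = n + 1 := by
    rw [hS, List.toFinset_card_of_nodup hpath.support_nodup,
      SimpleGraph.Walk.length_support]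
  have h1 : (S.biUnion fun u => G.neighborFinset u \ S).card ≤
      ∑ u ∈ S, (G.neighborFinset u \ S).card := Finset.card_biUnion_le
  have h2 : ∑ u ∈ S, (G.neighborFinset u \ S).card +
      ∑ u ∈ S, (G.neighborFinset u ∩ S).card ≤ (n + 1) * G.maxDegree := by
    rw [← Finset.sum_add_distrib]
    calc ∑ u ∈ S, ((G.neighborFinset u \ S).card + (G.neighborFinset u ∩ S).card)
        = ∑ u ∈ S, G.degree u := by
          refine Finset.sum_congr rfl fun u _ => ?_
          rw [Finset.card_sdiff_add_card_inter]
          rfl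
      _ ≤ ∑ _u ∈ S, G.maxDegree :=
          Finset.sum_le_sum fun u _ => G.degree_le_maxDegree u
      _ = (n + 1) * G.maxDegree := by
          rw [Finset.sum_const, smul_eq_mul, hScard]
  -- lower bound on the inner sum via counting ordered adjacent pairs
  set E : Finset (V × V) := (S ×ˢ S).filter (fun q => G.Adj q.1 q.2) with hE
  have h4 : E.card = ∑ u ∈ S, (G.neighborFinset u ∩ S).card := by
    rw [hE, Finset.card_filter, Finset.sum_product]
    refine Finset.sum_congr rfl fun u _ => ?_
    rw [← Finset.card_filter]
    congr 1
    ext v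
    simp [mem_neighborFinset, and_comm]
  have hinj := getVert_injOn' hpath
  have h5 : 2 * n ≤ E.card := by
    set A : Finset (V × V) :=
      (Finset.range n).image (fun i => (p.getVert i, p.getVert (i + 1))) with hA
    set B : Finset (V × V) :=
      (Finset.range n).image (fun i => (p.getVert (i + 1), p.getVert i)) with hB
    have hAcard : A.card = n := by
      rw [hA, Finset.card_image_of_injOn, Finset.card_range]
      intro i hi j hj hij
      simp only [Finset.coe_range, Set.mem_Iio] at hi hj
      exact hinj i (by omega) j (by omega) (congrArg Prod.fst hij)
    have hBcard : B.card = n := by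
      rw [hB, Finset.card_image_of_injOn, Finset.card_range]
      intro i hi j hj hij
      simp only [Finset.coe_range, Set.mem_Iio] at hi hj
      exact hinj i (by omega) j (by omega) (congrArg Prod.snd hij)
    have hAE : A ⊆ E := by
      intro x hx
      obtain ⟨i, hi, rfl⟩ := Finset.mem_image.1 hx
      rw [Finset.mem_range] at hi
      exact Finset.mem_filter.2 ⟨Finset.mem_product.2 ⟨hmemS i, hmemS (i + 1)⟩,
        p.adj_getVert_succ hi⟩
    have hBE : B ⊆ E := by
      intro x hx
      obtain ⟨i, hi, rfl⟩ := Finset.mem_image.1 hx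
      rw [Finset.mem_range] at hi
      exact Finset.mem_filter.2 ⟨Finset.mem_product.2 ⟨hmemS (i + 1), hmemS i⟩,
        (p.adj_getVert_succ hi).symm⟩
    have hdisj : Disjoint A B := by
      rw [Finset.disjoint_left]
      rintro x hxA hxB
      obtain ⟨i, hi, rfl⟩ := Finset.mem_image.1 hxA
      obtain ⟨j, hj, hij⟩ := Finset.mem_image.1 hxB
      rw [Finset.mem_range] at hi hj
      have h1' : i = j + 1 :=
        hinj i (by omega) (j + 1) (by omega) (congrArg Prod.fst hij).symm
      have h2' : i + 1 = j :=
        hinj (i + 1) (by omega) j (by omega) (congrArg Prod.snd hij).symm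
      omega
    calc 2 * n = A.card + B.card := by omega
      _ = (A ∪ B).card := (Finset.card_union_of_disjoint hdisj).symm
      _ ≤ E.card := Finset.card_le_card (Finset.union_subset hAE hBE)
  rw [h4] at h5
  -- final arithmetic
  obtain ⟨k, hk⟩ : ∃ k, G.maxDegree = k + 2 := ⟨G.maxDegree - 2, by omega⟩
  rw [hk]
  have hexp : (n + 1) * (k + 2) = (n + 1) * k + 2 * n + 2 := by ring
  rw [hk, hexp] at h2
  have : (n + 1) * (k + 2 - 2) = (n + 1) * k := by norm_num
  rw [this]
  omega
end

section
/- In the ladder-type graph H of the Max-2-SAT reduction, every path of the form ⟨z₁, z₂, …, z_n⟩ with z_i ∈ {x_i, x̄_i} for each i is a shortest path from z₁ to z_n, and its neighbourhood within H contains precisely the complementary vertices {x_i : z_i = x̄_i} ∪ {x̄_i : z_i = x_i}, giving centrality at least n within H (before adding source/sink vertices). -/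
open SimpleGraph

/-- The ladder graph `H` of the Max-2-SAT reduction. -/
def ladder (n : ℕ) : SimpleGraph (Fin n × Bool) :=
  SimpleGraph.fromRel (fun a b => a.1.val + 1 = b.1.val)

lemma ladder_adj {n : ℕ} {a b : Fin n × Bool} :
    (ladder n).Adj a b ↔ a ≠ b ∧ (a.1.val + 1 = b.1.val ∨ b.1.val + 1 = a.1.val) := by
  simp [ladder, SimpleGraph.fromRel_adj]

lemma ladder_walk_le {n : ℕ} {u v : Fin n × Bool} (q : (ladder n).Walk u v) :
    v.1.val ≤ u.1.val + q.length := by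
  induction q with
  | nil => simp
  | @cons a b c h q ih =>
    rw [ladder_adj] at h
    simp only [SimpleGraph.Walk.length_cons]
    omega

/-- Every "choice" path `⟨z₁, …, z_n⟩`, selecting one of `x_i, x̄_i` at each level `i`
(encoded by `z : Fin n → Bool`, with support exactly `[(0, z 0), (1, z 1), …]`), is a
shortest path from `z₁` to `z_n`, its neighbourhood within `H` is precisely the set of
complementary vertices `{(i, ¬ z i)}`, and hence its centrality is at least `n`. -/
theorem choice_path_shortest_and_central (n : ℕ) (hn : 2 ≤ n) (z : Fin n → Bool)
    (p : (ladder n).Walk (⟨0, by omega⟩, z ⟨0, by omega⟩)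
        (⟨n - 1, by omega⟩, z ⟨n - 1, by omega⟩))
    (hsupp : p.support = (List.finRange n).map (fun i => (i, z i))) :
    p.IsPath ∧
    p.length =
      (ladder n).dist (⟨0, by omega⟩, z ⟨0, by omega⟩) (⟨n - 1, by omega⟩, z ⟨n - 1, by omega⟩) ∧
    pathNbhd (ladder n) p = {v : Fin n × Bool | v.2 = ! z v.1} ∧
    n ≤ (pathNbhd (ladder n) p).ncard := by
  have hmem : ∀ u : Fin n × Bool, u ∈ p.support ↔ ∃ i : Fin n, (i, z i) = u := by
    intro u; rw [hsupp]; simp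
  have hpath : p.IsPath := by
    rw [SimpleGraph.Walk.isPath_def, hsupp]
    exact (List.nodup_finRange n).map (fun i j hij => by
      simpa using congrArg Prod.fst hij)
  have hlen : p.length = n - 1 := by
    have h1 : p.support.length = p.length + 1 := SimpleGraph.Walk.length_support p
    rw [hsupp] at h1
    simp at h1
    omega
  have hdist : p.length = (ladder n).dist (⟨0, by omega⟩, z ⟨0, by omega⟩)
      (⟨n - 1, by omega⟩, z ⟨n - 1, by omega⟩) := by
    have hle := SimpleGraph.dist_le p
    have hr := p.reachable
    obtain ⟨q, hq⟩ := hr.exists_walk_length_eq_dist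
    have := ladder_walk_le q
    simp at this
    omega
  have hset : pathNbhd (ladder n) p = {v : Fin n × Bool | v.2 = ! z v.1} := by
    ext v
    simp only [pathNbhd, Set.mem_setOf_eq]
    constructor
    · rintro ⟨hv, -⟩
      rw [hmem] at hv
      push_neg at hv
      have := hv v.1
      rcases hb : v.2 <;> rcases hz : z v.1 <;> simp_all [Prod.ext_iff]
    · intro hv
      have hvns : v ∉ p.support := by
        rw [hmem]
        rintro ⟨i, hi⟩
        have h1 : i = v.1 := congrArg Prod.fst hi
        have h2 : z i = v.2 := congrArg Prod.snd hi
        rw [h1, hv] at h2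
        simp at h2
      refine ⟨hvns, ?_⟩
      by_cases h0 : v.1.val = 0
      · refine ⟨(⟨1, by omega⟩, z ⟨1, by omega⟩), (hmem _).2 ⟨_, rfl⟩, ?_⟩
        rw [ladder_adj]
        constructor
        · intro h
          have := congrArg (fun x => x.1.val) h
          simp [h0] at this
        · right; simp [h0]
      · refine ⟨(⟨v.1.val - 1, by omega⟩, z ⟨v.1.val - 1, by omega⟩),
          (hmem _).2 ⟨_, rfl⟩, ?_⟩
        rw [ladder_adj]
        constructor
        · intro h
          have := congrArg (fun x => x.1.val) h
          simp at this
          omega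
        · left; simp; omega
  refine ⟨hpath, hdist, hset, ?_⟩
  rw [hset]
  have himg : {v : Fin n × Bool | v.2 = ! z v.1} =
      (fun i : Fin n => (i, ! z i)) '' Set.univ := by
    ext v
    simp only [Set.image_univ, Set.mem_range, Set.mem_setOf_eq]
    constructor
    · intro h; exact ⟨v.1, by rw [← h]⟩
    · rintro ⟨i, rfl⟩; rfl
  rw [himg, Set.ncard_image_of_injective _ (fun i j hij => by
    simpa using congrArg Prod.fst hij), Set.ncard_univ]
  simp
end

section
/- In the weighted graph G of the Max-2-SAT reduction, no clause vertex y_c can be an internal vertex of any shortest (minimum-weight) path: any path containing y_c as an internal vertex has total weight strictly greater than some alternative path between the same endpoints. -/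
open SimpleGraph

/-- Vertices of the reduction graph: ladder vertices `(i, b)`, four source/sink vertices,
and one vertex `y_c` per clause `c ∈ Fin m`. -/
abbrev RedV (n m : ℕ) := (Fin n × Bool) ⊕ (Bool × Bool) ⊕ Fin m

/-- The reduction graph `G` built from a Max-2-SAT instance with `n` variables and `m`
clauses `cl`. -/
def redGraph (n m : ℕ) (cl : Fin m → (Fin n × Bool) × (Fin n × Bool)) :
    SimpleGraph (RedV n m) :=
  SimpleGraph.fromRel (fun a b =>
    match a, b with
    | Sum.inl (i, _), Sum.inl (j, _) => i.val + 1 = j.val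
    | Sum.inr (Sum.inl (false, _)), Sum.inl (i, _) => i.val = 0
    | Sum.inr (Sum.inl (true, _)), Sum.inl (i, _) => i.val = n - 1
    | Sum.inr (Sum.inr j), Sum.inl v => v = (cl j).1 ∨ v = (cl j).2
    | _, _ => False)

/-- Is a vertex a clause vertex `y_c`? -/
def isClauseVtx {n m : ℕ} : RedV n m → Bool
  | Sum.inr (Sum.inr _) => true
  | _ => false

/-- Edge weights: weight `n` on edges incident to a clause vertex, weight `1` otherwise. -/
def redEdgeWt (n m : ℕ) : Sym2 (RedV n m) → ℕ :=
  Sym2.lift ⟨fun a b => if isClauseVtx a || isClauseVtx b then n else 1,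
    by intro a b; simp [Bool.or_comm]⟩

/-- The total weight of a walk in the reduction graph. -/
def redWeight {n m : ℕ} {cl : Fin m → (Fin n × Bool) × (Fin n × Bool)}
    {u v : RedV n m} (p : (redGraph n m cl).Walk u v) : ℕ :=
  (p.edges.map (redEdgeWt n m)).sum

section Aux
variable {n m : ℕ} {cl : Fin m → (Fin n × Bool) × (Fin n × Bool)}

lemma wt_inl (w w' : Fin n × Bool) :
    redEdgeWt n m s(Sum.inl w, Sum.inl w') = 1 := rfl

lemma wt_clause (j : Fin m) (x : RedV n m) :
    redEdgeWt n m s(Sum.inr (Sum.inr j), x) = n := rfl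

lemma redWeight_cons {a b c : RedV n m} (h : (redGraph n m cl).Adj a b)
    (p : (redGraph n m cl).Walk b c) :
    redWeight (Walk.cons h p) = redEdgeWt n m s(a, b) + redWeight p := rfl

lemma redWeight_append {a b c : RedV n m} (p : (redGraph n m cl).Walk a b)
    (q : (redGraph n m cl).Walk b c) :
    redWeight (p.append q) = redWeight p + redWeight q := by
  simp [redWeight, Walk.edges_append]

lemma redWeight_reverse {a b : RedV n m} (p : (redGraph n m cl).Walk a b) :
    redWeight p.reverse = redWeight p := by
  simp [redWeight, Walk.edges_reverse, List.sum_reverse]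

lemma redWeight_copy {a b a' b' : RedV n m} (p : (redGraph n m cl).Walk a b)
    (ha : a = a') (hb : b = b') :
    redWeight (p.copy ha hb) = redWeight p := by
  simp [redWeight, Walk.edges_copy]

lemma adj_step (k : ℕ) (h : k + 1 < n) (b b' : Bool) :
    (redGraph n m cl).Adj (Sum.inl (⟨k, by omega⟩, b)) (Sum.inl (⟨k+1, h⟩, b')) := by
  rw [redGraph, SimpleGraph.fromRel_adj]
  refine ⟨by simp, Or.inl rfl⟩

lemma adj_clause {j : Fin m} {z : RedV n m}
    (h : (redGraph n m cl).Adj (Sum.inr (Sum.inr j)) z) : ∃ w, z = Sum.inl w := by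
  rcases z with w | z
  · exact ⟨w, rfl⟩
  · exfalso
    rw [redGraph, SimpleGraph.fromRel_adj] at h
    rcases z with ⟨b1, b2⟩ | k <;> rcases h with ⟨-, h | h⟩ <;>
      first | exact h | (rcases b1 with _|_ <;> exact h)

lemma inl_mk_eq (a : ℕ) (ha : a < n) (i : Fin n) (b : Bool) (h : a = i.val) :
    (Sum.inl (⟨a, ha⟩, b) : RedV n m) = Sum.inl (i, b) := by subst h; rfl

lemma redWeight_nil {a : RedV n m} : redWeight (Walk.nil : (redGraph n m cl).Walk a a) = 0 := rfl

def straight (n m : ℕ) (cl : Fin m → (Fin n × Bool) × (Fin n × Bool)) (b : Bool) :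
    (d k : ℕ) → (h : k + d < n) →
      (redGraph n m cl).Walk (Sum.inl (⟨k, by omega⟩, b)) (Sum.inl (⟨k + d, h⟩, b))
  | 0, k, h => Walk.nil
  | d+1, k, h =>
      Walk.cons (adj_step k (by omega) b b)
        ((straight n m cl b d (k+1) (by omega)).copy rfl
          (inl_mk_eq _ _ ⟨k + (d+1), h⟩ b (by show k+1+d = k+(d+1); omega)))

lemma straight_wt (b : Bool) : ∀ (d k : ℕ) (h : k + d < n),
    redWeight (straight n m cl b d k h) = d
  | 0, k, h => rfl
  | d+1, k, h => by
      rw [straight, redWeight_cons, redWeight_copy, straight_wt b d (k+1) (by omega), wt_inl]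
      omega

lemma connAux (hn : 2 ≤ n) (i i' : Fin n) (b b' : Bool) (hle : i.val ≤ i'.val) :
    ∃ r : (redGraph n m cl).Walk (Sum.inl (i, b)) (Sum.inl (i', b')), redWeight r < 2 * n := by
  have hi' := i'.isLt
  rcases Nat.lt_or_ge i.val i'.val with hlt | hge
  · refine ⟨(Walk.cons (adj_step i.val (by omega) b b')
      ((straight n m cl b' (i'.val - (i.val+1)) (i.val+1) (by omega)).copy rfl
        (inl_mk_eq _ _ i' b' (by omega)))).copy
      (inl_mk_eq _ _ i b rfl) rfl, ?_⟩
    rw [redWeight_copy, redWeight_cons, redWeight_copy, straight_wt, wt_inl]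
    omega
  · have hii : i = i' := Fin.ext (le_antisymm hle hge)
    subst hii
    by_cases hbb : b = b'
    · subst hbb; exact ⟨Walk.nil, by rw [redWeight_nil]; omega⟩
    · rcases Nat.eq_zero_or_pos i.val with h0 | h1
      · refine ⟨(Walk.cons (adj_step 0 (by omega) b b)
          (Walk.cons ((adj_step 0 (by omega) b' b).symm) Walk.nil)).copy
          (inl_mk_eq _ _ i b (by omega)) (inl_mk_eq _ _ i b' (by omega)), ?_⟩
        rw [redWeight_copy, redWeight_cons, redWeight_cons, wt_inl, wt_inl, redWeight_nil]
        omega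
      · obtain ⟨k, hk⟩ : ∃ k, i.val = k + 1 := ⟨i.val - 1, by omega⟩
        refine ⟨(Walk.cons ((adj_step k (by omega) b b).symm)
          (Walk.cons (adj_step k (by omega) b b') Walk.nil)).copy
          (inl_mk_eq _ _ i b (by omega)) (inl_mk_eq _ _ i b' (by omega)), ?_⟩
        rw [redWeight_copy, redWeight_cons, redWeight_cons, wt_inl, wt_inl, redWeight_nil]
        omega

lemma connector (hn : 2 ≤ n) (w1 w2 : Fin n × Bool) :
    ∃ r : (redGraph n m cl).Walk (Sum.inl w1) (Sum.inl w2), redWeight r < 2 * n := by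
  obtain ⟨i, b⟩ := w1; obtain ⟨i', b'⟩ := w2
  rcases le_total i.val i'.val with h | h
  · exact connAux hn i i' b b' h
  · obtain ⟨r, hr⟩ := connAux (cl := cl) hn i' i b' b h
    exact ⟨r.reverse, by rwa [redWeight_reverse]⟩

end Aux

/-- No clause vertex `y_c` can be an internal vertex of a shortest (minimum-weight) path:
any path containing `y_c` as an internal vertex has total weight strictly greater than
some alternative path between the same endpoints. -/
theorem clause_vertex_not_internal (n m : ℕ) (hn : 2 ≤ n)
    (cl : Fin m → (Fin n × Bool) × (Fin n × Bool))
    (u v : RedV n m) (p : (redGraph n m cl).Walk u v) (hp : p.IsPath)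
    (j : Fin m)
    (hmem : (Sum.inr (Sum.inr j) : RedV n m) ∈ p.support)
    (hu : (Sum.inr (Sum.inr j) : RedV n m) ≠ u)
    (hv : (Sum.inr (Sum.inr j) : RedV n m) ≠ v) :
    ∃ q : (redGraph n m cl).Walk u v, redWeight q < redWeight p := by
  obtain ⟨p1, p2, hsplit⟩ :
      ∃ (p1 : (redGraph n m cl).Walk u (Sum.inr (Sum.inr j)))
        (p2 : (redGraph n m cl).Walk (Sum.inr (Sum.inr j)) v), p = p1.append p2 :=
    ⟨_, _, (p.take_spec hmem).symm⟩
  obtain ⟨q1, rfl⟩ : ∃ q1 : (redGraph n m cl).Walk (Sum.inr (Sum.inr j)) u,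
      p1 = q1.reverse := ⟨p1.reverse, (p1.reverse_reverse).symm⟩
  cases q1 with
  | nil => exact absurd rfl hu
  | cons h1 t1 =>
    cases p2 with
    | nil => exact absurd rfl hv
    | cons h2 t2 =>
      obtain ⟨w1, rfl⟩ := adj_clause h1
      obtain ⟨w2, rfl⟩ := adj_clause h2
      obtain ⟨r, hr⟩ := connector (cl := cl) hn w1 w2
      refine ⟨t1.reverse.append (r.append t2), ?_⟩
      rw [hsplit, redWeight_append, redWeight_append, redWeight_append,
        Walk.reverse_cons, redWeight_append, redWeight_reverse]
      have h2w : redWeight (Walk.cons h2 t2) = n + redWeight t2 := by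
        rw [redWeight_cons, wt_clause]
      have h1w : redWeight (Walk.cons h1.symm Walk.nil :
          (redGraph n m cl).Walk _ (Sum.inr (Sum.inr j))) =
          redEdgeWt n m s(Sum.inl w1, Sum.inr (Sum.inr j)) := by
        rw [redWeight_cons, redWeight_nil, Nat.add_zero]
      have hwc : redEdgeWt n m s(Sum.inl w1, Sum.inr (Sum.inr j)) = n := by
        rw [Sym2.eq_swap, wt_clause]
      omega
end
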